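/- (Marginal on midpoints.) Let a,b,c > 0, set A = (a−b−c)/(a+b+c), B = (b−a−c)/(a+b+c), C = (c−a−b)/(a+b+c), and let ε_a, ε_b, ε_c ∈ ℂ satisfy ε_b ε_c = A, ε_a ε_c = B, ε_a ε_b = C. Then for every σ^e ∈ {−1,+1}^{E_n}, Σ_{σ^v ∈ {−1,+1}^{V_n}} w(σ^v, σ^e) = 2^{2n²} ∏_{v ∈ V_n} (1 + A σ^e_{v,b} σ^e_{v,c} + B σ^e_{v,a} σ^e_{v,c} + C σ^e_{v,a} σ^e_{v,b}) = (8/(a+b+c))^{2n²} · w(σ^e), where w(σ^e) is the 1-2 model weight of σ^e. -/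

import Mathlib

open MeasureTheory Filter Topology

/-- The three edge types of the hexagonal lattice: `a` (horizontal),
`b` (NW/SE), `c` (NE/SW). -/
inductive EType : Type
  | a : EType
  | b : EType
  | c : EType
deriving DecidableEq

instance : Fintype EType :=
  ⟨{.a, .b, .c}, fun x => by cases x <;> simp⟩

/-- A vertex of the (toroidal or infinite) hexagonal lattice with coordinates in `α`. -/
abbrev HexVtx (α : Type) : Type := (α × α) × Bool

/-- An edge of the hexagonal lattice: its type together with coordinates in `α`. -/
abbrev HexEdge (α : Type) : Type := EType × α × α

/-- The `s`-type edge incident to the vertex `v`. -/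
def edgeAt {α : Type} [Sub α] [One α] (v : HexVtx α) : EType → HexEdge α
  | .a => (.a, v.1)
  | .b => if v.2 then (.b, v.1) else (.b, (v.1.1, v.1.2 - 1))
  | .c => if v.2 then (.c, v.1) else (.c, (v.1.1 - 1, v.1.2))

/-- The two endpoints of an edge. -/
def ends {α : Type} [Add α] [One α] : HexEdge α → HexVtx α × HexVtx α
  | (.a, x, y) => (((x, y), false), ((x, y), true))
  | (.b, x, y) => (((x, y), true), ((x, y + 1), false))
  | (.c, x, y) => (((x, y), true), ((x + 1, y), false))

/-- The 1-2 model vertex weight of a triple of incident edge spins. -/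
def vWt (a b c : ℝ) (sa sb sc : Bool) : ℝ :=
  if sb = sc ∧ sa ≠ sb then a
  else if sa = sc ∧ sb ≠ sa then b
  else if sa = sb ∧ sc ≠ sa then c
  else 0

/-- Vertices of the toroidal lattice `H_n`. -/
abbrev VF (n : ℕ) : Type := HexVtx (ZMod n)

/-- Edges of the toroidal lattice `H_n`. -/
abbrev EF (n : ℕ) : Type := HexEdge (ZMod n)

/-- Spin configurations on the edges of `H_n`; `true` means spin `+1`. -/
abbrev ConfF (n : ℕ) : Type := EF n → Bool

/-- The 1-2 model weight of a configuration on `H_n`. -/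
def confWt (n : ℕ) [NeZero n] (a b c : ℝ) (σ : ConfF n) : ℝ :=
  ∏ v : VF n, vWt a b c (σ (edgeAt v .a)) (σ (edgeAt v .b)) (σ (edgeAt v .c))

/-- The 1-2 model partition function on `H_n`. -/
noncomputable def Zn (n : ℕ) [NeZero n] (a b c : ℝ) : ℝ :=
  ∑ σ : ConfF n, confWt n a b c σ

/-- Vertices of the infinite hexagonal lattice `H`. -/
abbrev VI : Type := HexVtx ℤ

/-- Edges of the infinite hexagonal lattice `H`. -/
abbrev EI : Type := HexEdge ℤ

/-- Configurations on the infinite lattice: the space `Ω = {−1,+1}^𝔼`. -/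
abbrev Config : Type := EI → Bool

/-- Periodic lift of a configuration on `H_n` to the infinite lattice. -/
def liftConf (n : ℕ) (σ : ConfF n) : Config :=
  fun e => σ (e.1, ((e.2.1 : ZMod n), (e.2.2 : ZMod n)))

/-- The pushforward `μ̂_n` on `Ω` of the 1-2 model measure `μ_n` on `H_n`. -/
noncomputable def muHat (n : ℕ) [NeZero n] (a b c : ℝ) : Measure Config :=
  ∑ σ : ConfF n, ENNReal.ofReal (confWt n a b c σ / Zn n a b c) •
    Measure.dirac (liftConf n σ)

/-- `μ` is the weak limit of the sequence `μ̂_n` (tested against all bounded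
continuous functions). -/
def IsWeakLimit (a b c : ℝ) (μ : Measure Config) : Prop :=
  IsProbabilityMeasure μ ∧
    ∀ f : BoundedContinuousFunction Config ℝ,
      Tendsto (fun n : ℕ => ∫ ω, f ω ∂ muHat (n + 1) a b c) atTop (𝓝 (∫ ω, f ω ∂ μ))

/-- The spin value (`±1`) of a Boolean state, as a complex number. -/
def cspin (s : Bool) : ℂ := if s then 1 else -1

/-- The spin-vector weight `w(σ^v, σ^e)` of a pair of vertex and midpoint spin
configurations on `H_n`, with half-edge constants `ε_a, ε_b, ε_c ∈ ℂ`. -/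
noncomputable def spinWt (n : ℕ) [NeZero n] (ε : EType → ℂ)
    (σv : VF n → Bool) (σe : ConfF n) : ℂ :=
  ∏ v : VF n, ∏ s : EType, (1 + ε s * cspin (σv v) * cspin (σe (edgeAt v s)))

/-!
Expanding the product over the three half-edges at a vertex `v`, the terms that are odd in
`σ^v_v` cancel when `σ^v_v` is summed over `±1`, and `σ^v_v² = 1` turns the even terms into
`ε_s ε_t σ^e_s σ^e_t`; the constraints on `ε` make these the coefficients `A, B, C`. Each vertex
factor depends only on the three incident edge spins, and a case check over the eight spin
patterns shows it equals `4 / (a + b + c)` times the 1-2 vertex weight.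
-/

lemma prod_etype {M : Type*} [CommMonoid M] (f : EType → M) :
    ∏ s : EType, f s = f .a * f .b * f .c := by
  have : (Finset.univ : Finset EType) = {.a, .b, .c} := by decide
  simp [this, mul_assoc]

lemma card_VF (n : ℕ) [NeZero n] : Fintype.card (VF n) = 2 * n ^ 2 := by
  simp only [Fintype.card_prod, ZMod.card, Fintype.card_bool]
  ring

@[simp] lemma cspin_true : cspin true = 1 := rfl

@[simp] lemma cspin_false : cspin false = -1 := rfl

def vtxPoly (A B C : ℂ) (sa sb sc : Bool) : ℂ :=
  1 + A * cspin sb * cspin sc + B * cspin sa * cspin sc + C * cspin sa * cspin sb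

lemma sum_bool_prod_one_add_mul_cspin (ε : EType → ℂ) {A B C : ℂ}
    (hbc : ε .b * ε .c = A) (hac : ε .a * ε .c = B) (hab : ε .a * ε .b = C)
    (t : EType → Bool) :
    ∑ x : Bool, ∏ s : EType, (1 + ε s * cspin x * cspin (t s)) =
      2 * vtxPoly A B C (t .a) (t .b) (t .c) := by
  rw [Fintype.sum_bool, prod_etype, prod_etype]
  simp only [vtxPoly, cspin_true, cspin_false]
  linear_combination (2 * cspin (t .b) * cspin (t .c)) * hbc
    + (2 * cspin (t .a) * cspin (t .c)) * hac + (2 * cspin (t .a) * cspin (t .b)) * hab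

theorem sum_spinWt_eq_prod_vtxPoly (n : ℕ) [NeZero n] (ε : EType → ℂ) {A B C : ℂ}
    (hbc : ε .b * ε .c = A) (hac : ε .a * ε .c = B) (hab : ε .a * ε .b = C)
    (σe : ConfF n) :
    ∑ σv : VF n → Bool, spinWt n ε σv σe =
      2 ^ (2 * n ^ 2) *
        ∏ v : VF n, vtxPoly A B C (σe (edgeAt v .a)) (σe (edgeAt v .b)) (σe (edgeAt v .c)) := by
  unfold spinWt
  rw [← Fintype.prod_sum fun v x => ∏ s, (1 + ε s * cspin x * cspin (σe (edgeAt v s))),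
    Fintype.prod_congr _ _ fun v => sum_bool_prod_one_add_mul_cspin ε hbc hac hab _,
    Finset.prod_mul_distrib, Finset.prod_const, Finset.card_univ, card_VF]

lemma vtxPoly_eq_mul_vWt {a b c : ℝ} (hs : a + b + c ≠ 0) (sa sb sc : Bool) :
    vtxPoly (((a - b - c) / (a + b + c) : ℝ) : ℂ) (((b - a - c) / (a + b + c) : ℝ) : ℂ)
        (((c - a - b) / (a + b + c) : ℝ) : ℂ) sa sb sc =
      ((4 / (a + b + c) : ℝ) : ℂ) * (vWt a b c sa sb sc : ℂ) := by
  have hsC : (a : ℂ) + b + c ≠ 0 := by exact_mod_cast hs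
  cases sa <;> cases sb <;> cases sc <;> simp [vtxPoly, cspin, vWt] <;> field_simp <;> ring

/-- marginal on midpoints. Summing the spin-vector weight over
all vertex configurations yields a weight proportional to the 1-2 model weight. -/
theorem marginal_on_midpoints
    (n : ℕ) [NeZero n] (a b c : ℝ) (ha : 0 < a) (hb : 0 < b) (hc : 0 < c)
    (A B C : ℝ)
    (hA : A = (a - b - c) / (a + b + c))
    (hB : B = (b - a - c) / (a + b + c))
    (hC : C = (c - a - b) / (a + b + c))
    (ε : EType → ℂ)
    (hbc : ε .b * ε .c = (A : ℂ))
    (hac : ε .a * ε .c = (B : ℂ))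
    (hab : ε .a * ε .b = (C : ℂ))
    (σe : ConfF n) :
    (∑ σv : VF n → Bool, spinWt n ε σv σe =
        2 ^ (2 * n ^ 2) *
          ∏ v : VF n,
            (1 + (A : ℂ) * cspin (σe (edgeAt v .b)) * cspin (σe (edgeAt v .c))
               + (B : ℂ) * cspin (σe (edgeAt v .a)) * cspin (σe (edgeAt v .c))
               + (C : ℂ) * cspin (σe (edgeAt v .a)) * cspin (σe (edgeAt v .b)))) ∧
      ∑ σv : VF n → Bool, spinWt n ε σv σe =
        ((8 / (a + b + c) : ℝ) : ℂ) ^ (2 * n ^ 2) * ((confWt n a b c σe : ℝ) : ℂ) := by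
  have hsum := sum_spinWt_eq_prod_vtxPoly n ε hbc hac hab σe
  refine ⟨hsum, ?_⟩
  subst hA hB hC
  simp only [vtxPoly_eq_mul_vWt (by positivity : a + b + c ≠ 0)] at hsum
  rw [hsum, Finset.prod_mul_distrib, Finset.prod_const, Finset.card_univ, card_VF, ← mul_assoc,
    ← mul_pow, confWt]
  push_cast
  ring
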